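/- Identity property for io-disjoint FLIF expressions: if α is an io-disjoint FLIF expression (every subexpression β of α, including α itself, satisfies I(β) ∩ O(β) = ∅), D is an instance, and (ν₁, ν₂) ∈ ⟦α⟧_D, then also (ν₂, ν₂) ∈ ⟦α⟧_D. -/

import Mathlib

/-- FLIF expressions over relation names `ρ`, variables `V`, and domain `D`. -/
inductive FLIF (ρ V D : Type) : Type
  | rel (R : ρ) (xs ys : List V)
  | eqVar (x y : V)
  | eqConst (x : V) (c : D)
  | assignVar (x y : V)
  | assignConst (x : V) (c : D)
  | comp (a b : FLIF ρ V D)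
  | union (a b : FLIF ρ V D)
  | diff (a b : FLIF ρ V D)

namespace FLIF

variable {ρ V D : Type}

/-- Dynamic semantics of FLIF: a binary relation on valuations `V → D`,
given a database instance `I` assigning to each relation name a set of tuples. -/
def sem (I : ρ → Set (List D)) [DecidableEq V] : FLIF ρ V D → (V → D) → (V → D) → Prop
  | rel R xs ys, ν₁, ν₂ =>
      (xs.map ν₁ ++ ys.map ν₂) ∈ I R ∧ ∀ v : V, v ∉ ys → ν₁ v = ν₂ v
  | eqVar x y, ν₁, ν₂ => ν₁ = ν₂ ∧ ν₁ x = ν₁ y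
  | eqConst x c, ν₁, ν₂ => ν₁ = ν₂ ∧ ν₁ x = c
  | assignVar x y, ν₁, ν₂ => ν₂ = Function.update ν₁ x (ν₁ y)
  | assignConst x c, ν₁, ν₂ => ν₂ = Function.update ν₁ x c
  | comp a b, ν₁, ν₂ => ∃ ν, sem I a ν₁ ν ∧ sem I b ν ν₂
  | union a b, ν₁, ν₂ => sem I a ν₁ ν₂ ∨ sem I b ν₁ ν₂
  | diff a b, ν₁, ν₂ => sem I a ν₁ ν₂ ∧ ¬ sem I b ν₁ ν₂

variable [DecidableEq V]

/-- Syntactic output variables `O(α)`. -/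
def outs : FLIF ρ V D → Finset V
  | rel _ _ ys => ys.toFinset
  | eqVar _ _ => ∅
  | eqConst _ _ => ∅
  | assignVar x _ => {x}
  | assignConst x _ => {x}
  | comp a b => outs a ∪ outs b
  | union a b => outs a ∪ outs b
  | diff a _ => outs a

/-- Syntactic input variables `I(α)`. -/
def inps : FLIF ρ V D → Finset V
  | rel _ xs _ => xs.toFinset
  | eqVar x y => {x, y}
  | eqConst x _ => {x}
  | assignVar _ y => {y}
  | assignConst _ _ => ∅
  | comp a b => inps a ∪ (inps b \ outs a)
  | union a b => inps a ∪ inps b ∪ symmDiff (outs a) (outs b)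
  | diff a b => inps a ∪ inps b ∪ symmDiff (outs a) (outs b)

/-- Free variables of an expression: `vars(α) = I(α) ∪ O(α)`. -/
def vars (α : FLIF ρ V D) : Finset V := inps α ∪ outs α

/-- `α` is io-disjoint: every subexpression `β` of `α` (including `α` itself)
satisfies `I(β) ∩ O(β) = ∅`. -/
def ioDisjoint : FLIF ρ V D → Prop
  | comp a b => ioDisjoint a ∧ ioDisjoint b ∧ inps (comp a b) ∩ outs (comp a b) = ∅
  | union a b => ioDisjoint a ∧ ioDisjoint b ∧ inps (union a b) ∩ outs (union a b) = ∅
  | diff a b => ioDisjoint a ∧ ioDisjoint b ∧ inps (diff a b) ∩ outs (diff a b) = ∅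
  | α => inps α ∩ outs α = ∅

theorem inertia (I : ρ → Set (List D)) (α : FLIF ρ V D) :
    ∀ (ν₁ ν₂ : V → D), sem I α ν₁ ν₂ → ∀ v, v ∉ outs α → ν₁ v = ν₂ v := by
  induction α with
  | rel R xs ys =>
      intro ν₁ ν₂ h v hv
      exact h.2 v (by simpa [outs, List.mem_toFinset] using hv)
  | eqVar x y => intro ν₁ ν₂ h v _; rw [h.1]
  | eqConst x c => intro ν₁ ν₂ h v _; rw [h.1]
  | assignVar x y =>
      intro ν₁ ν₂ h v hv
      simp only [outs, Finset.mem_singleton] at hv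
      rw [h, Function.update_of_ne hv]
  | assignConst x c =>
      intro ν₁ ν₂ h v hv
      simp only [outs, Finset.mem_singleton] at hv
      rw [h, Function.update_of_ne hv]
  | comp a b iha ihb =>
      intro ν₁ ν₂ h v hv
      obtain ⟨ν, ha, hb⟩ := h
      simp only [outs, Finset.mem_union, not_or] at hv
      rw [iha ν₁ ν ha v hv.1, ihb ν ν₂ hb v hv.2]
  | union a b iha ihb =>
      intro ν₁ ν₂ h v hv
      simp only [outs, Finset.mem_union, not_or] at hv
      rcases h with h | h
      · exact iha ν₁ ν₂ h v hv.1
      · exact ihb ν₁ ν₂ h v hv.2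
  | diff a b iha ihb =>
      intro ν₁ ν₂ h v hv
      exact iha ν₁ ν₂ h.1 v hv

theorem patch_lemma (I : ρ → Set (List D)) (α : FLIF ρ V D) (hio : ioDisjoint α) :
    ∀ (ν₁ ν₂ μ : V → D), sem I α ν₁ ν₂ → (∀ v ∈ inps α, μ v = ν₁ v) →
      sem I α μ (fun v => if v ∈ outs α then ν₂ v else μ v) := by
  induction α with
  | rel R xs ys =>
      intro ν₁ ν₂ μ h hag
      simp only [sem, outs, inps] at *
      constructor
      · have h1 : List.map μ xs = List.map ν₁ xs :=
          List.map_congr_left fun x hx => hag x (List.mem_toFinset.mpr hx)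
        have h2 : List.map (fun v => if v ∈ ys.toFinset then ν₂ v else μ v) ys
            = List.map ν₂ ys :=
          List.map_congr_left fun y hy => by simp [List.mem_toFinset.mpr hy]
        have h3 := h.1; rw [← h2] at h3; rw [h1]; exact h3
      · intro v hv
        simp [List.mem_toFinset, hv]
  | eqVar x y =>
      intro ν₁ ν₂ μ h hag
      have hx : μ x = ν₁ x := hag x (by simp [inps])
      have hy : μ y = ν₁ y := hag y (by simp [inps])
      exact ⟨by funext v; simp [outs], by rw [hx, hy, h.2]⟩
  | eqConst x c =>
      intro ν₁ ν₂ μ h hag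
      have hx : μ x = ν₁ x := hag x (by simp [inps])
      exact ⟨by funext v; simp [outs], by rw [hx, h.2]⟩
  | assignVar x y =>
      intro ν₁ ν₂ μ h hag
      have hy : μ y = ν₁ y := hag y (by simp [inps])
      have h' : ν₂ = Function.update ν₁ x (ν₁ y) := h
      funext v
      by_cases hv : v = x
      · subst hv
        simp [outs, h', Function.update_self, hy]
      · simp [outs, hv, Function.update_of_ne hv]
  | assignConst x c =>
      intro ν₁ ν₂ μ h hag
      have h' : ν₂ = Function.update ν₁ x c := h
      funext v
      by_cases hv : v = x
      · subst hv
        simp [outs, h', Function.update_self]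
      · simp [outs, hv, Function.update_of_ne hv]
  | comp a b iha ihb =>
      intro ν₁ ν₂ μ h hag
      obtain ⟨hioa, hiob, _⟩ := hio
      obtain ⟨ν, ha, hb⟩ := h
      have haga : ∀ v ∈ inps a, μ v = ν₁ v := fun v hv =>
        hag v (by simp [inps, hv])
      have sa := iha hioa ν₁ ν μ ha haga
      set Pa : V → D := fun v => if v ∈ outs a then ν v else μ v with hPa
      have hagb : ∀ v ∈ inps b, Pa v = ν v := by
        intro v hv
        by_cases ho : v ∈ outs a
        · simp [hPa, ho]
        · have : μ v = ν₁ v := hag v (by simp [inps, hv, ho])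
          simp only [hPa, if_neg ho]
          rw [this, inertia I a ν₁ ν ha v ho]
      have sb := ihb hiob ν ν₂ Pa hb hagb
      refine ⟨Pa, sa, ?_⟩
      have : (fun v => if v ∈ outs b then ν₂ v else Pa v)
          = (fun v => if v ∈ outs (comp a b) then ν₂ v else μ v) := by
        funext v
        by_cases hb' : v ∈ outs b
        · simp [outs, hb']
        · by_cases ha' : v ∈ outs a
          · simp only [hPa, if_neg hb', if_pos ha']
            have : ν v = ν₂ v := inertia I b ν ν₂ hb v hb'
            simp [outs, ha', this]
          · simp [outs, hPa, ha', hb']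
      rw [this] at sb
      exact sb
  | union a b iha ihb =>
      intro ν₁ ν₂ μ h hag
      obtain ⟨hioa, hiob, _⟩ := hio
      rcases h with h | h
      · left
        have sa := iha hioa ν₁ ν₂ μ h (fun v hv => hag v (by simp [inps, hv]))
        have : (fun v => if v ∈ outs a then ν₂ v else μ v)
            = (fun v => if v ∈ outs (union a b) then ν₂ v else μ v) := by
          funext v
          by_cases ha' : v ∈ outs a
          · simp [outs, ha']
          · by_cases hb' : v ∈ outs b
            · have hsd : v ∈ inps (union a b) := by
                simp [inps, Finset.mem_symmDiff, ha', hb']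
              have : μ v = ν₁ v := hag v hsd
              have h2 : ν₁ v = ν₂ v := inertia I a ν₁ ν₂ h v ha'
              simp [outs, ha', hb', this, h2]
            · simp [outs, ha', hb']
        rw [this] at sa; exact sa
      · right
        have sb := ihb hiob ν₁ ν₂ μ h (fun v hv => hag v (by simp [inps, hv]))
        have : (fun v => if v ∈ outs b then ν₂ v else μ v)
            = (fun v => if v ∈ outs (union a b) then ν₂ v else μ v) := by
          funext v
          by_cases hb' : v ∈ outs b
          · simp [outs, hb']
          · by_cases ha' : v ∈ outs a
            · have hsd : v ∈ inps (union a b) := by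
                simp [inps, Finset.mem_symmDiff, ha', hb']
              have : μ v = ν₁ v := hag v hsd
              have h2 : ν₁ v = ν₂ v := inertia I b ν₁ ν₂ h v hb'
              simp [outs, ha', hb', this, h2]
            · simp [outs, ha', hb']
        rw [this] at sb; exact sb
  | diff a b iha ihb =>
      intro ν₁ ν₂ μ h hag
      obtain ⟨hioa, hiob, htop⟩ := hio
      have hnouts : ∀ v, v ∈ inps (diff a b) → v ∉ outs a := by
        intro v hv hvo
        exact Finset.eq_empty_iff_forall_notMem.mp htop v
          (Finset.mem_inter.mpr ⟨hv, hvo⟩)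
      have sa := iha hioa ν₁ ν₂ μ h.1 (fun v hv => hag v (by simp [inps, hv]))
      refine ⟨by exact sa, ?_⟩
      intro hbad
      apply h.2
      have hagb : ∀ v ∈ inps b, ν₁ v = μ v :=
        fun v hv => (hag v (by simp [inps, hv])).symm
      have sb := ihb hiob μ (fun v => if v ∈ outs (diff a b) then ν₂ v else μ v)
        ν₁ hbad hagb
      have : (fun v => if v ∈ outs b then
          (fun v => if v ∈ outs (diff a b) then ν₂ v else μ v) v else ν₁ v) = ν₂ := by
        funext v
        by_cases hb' : v ∈ outs b
        · by_cases ha' : v ∈ outs a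
          · simp [outs, hb', ha']
          · have hsd : v ∈ inps (diff a b) := by
              simp [inps, Finset.mem_symmDiff, ha', hb']
            have h1 : μ v = ν₁ v := hag v hsd
            have h2 : ν₁ v = ν₂ v := inertia I a ν₁ ν₂ h.1 v ha'
            simp [outs, hb', ha', h1, h2]
        · have ha' : v ∉ outs a := by
            intro ha''
            by_cases hsd0 : v ∈ inps (diff a b)
            · exact hnouts v hsd0 ha''
            · apply hsd0
              simp [inps, Finset.mem_symmDiff, ha'', hb']
          have h2 : ν₁ v = ν₂ v := inertia I a ν₁ ν₂ h.1 v ha'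
          simp [hb', h2]
      rw [this] at sb
      exact sb

end FLIF

/-- **Identity property.** For an io-disjoint expression `α`,
if `(ν₁, ν₂) ∈ ⟦α⟧_D` then also `(ν₂, ν₂) ∈ ⟦α⟧_D`. -/
theorem identity_property {ρ V D : Type} [DecidableEq V] (I : ρ → Set (List D))
    (α : FLIF ρ V D) (hio : FLIF.ioDisjoint α)
    (ν₁ ν₂ : V → D) (h : FLIF.sem I α ν₁ ν₂) :
    FLIF.sem I α ν₂ ν₂ := by
  have hdisj : FLIF.inps α ∩ FLIF.outs α = ∅ := by
    cases α <;> first | exact hio | exact hio.2.2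
  have hag : ∀ v ∈ FLIF.inps α, ν₂ v = ν₁ v := by
    intro v hv
    have hvo : v ∉ FLIF.outs α := by
      intro hvo
      have := Finset.mem_inter.mpr ⟨hv, hvo⟩
      simp [hdisj] at this
    exact (FLIF.inertia I α ν₁ ν₂ h v hvo).symm
  have := FLIF.patch_lemma I α hio ν₁ ν₂ ν₂ h hag
  simpa using this
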